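/- arXiv:2511.01292 — 3 statements merged into one kernel-verified Lean document; each statement's English description precedes it below -/
import Mathlib

section
/- Fix l ≥ 1, z ∈ ℝ^l and τ > 0, and let z̄ := (1/l)∑_{j=1}^l z_j. Then for every i, linearized_softmax(z/τ)_i − 1/l = (z_i − z̄)/(lτ). Consequently, the empirical variance of the components of linearized_softmax(z/τ), namely (1/l)∑_{i=1}^l (linearized_softmax(z/τ)_i − 1/l)², equals 1/(l²τ²) times the empirical variance (1/l)∑_{i=1}^l (z_i − z̄)² of the components of z; in particular it is inversely proportional to τ². -/
/-- The linearized softmax on `ℝ^l`: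
`linearizedSoftmax l z = (1/l − (1/l²)·∑ j, z j) • 𝟙 + (1/l) • z`,
the first-order Taylor expansion of softmax at the origin. -/
noncomputable def linearizedSoftmax (l : ℕ) (z : Fin l → ℝ) : Fin l → ℝ :=
  fun i => (1 / (l : ℝ) - (1 / (l : ℝ) ^ 2) * ∑ j, z j) + (1 / (l : ℝ)) * z i

theorem linearizedSoftmax_sub_one_div (l : ℕ) (z : Fin l → ℝ) (i : Fin l) :
    linearizedSoftmax l z i - 1 / (l : ℝ) = (z i - (1 / (l : ℝ)) * ∑ j, z j) / l := by
  simp only [linearizedSoftmax]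
  ring

theorem linearizedSoftmax_div_sub_one_div (l : ℕ) (z : Fin l → ℝ) (τ : ℝ) (i : Fin l) :
    linearizedSoftmax l (fun j => z j / τ) i - 1 / (l : ℝ)
      = (z i - (1 / (l : ℝ)) * ∑ j, z j) / (l * τ) := by
  rw [linearizedSoftmax_sub_one_div, ← Finset.sum_div]
  ring

theorem linearizedSoftmax_temperature_variance_general (l : ℕ) (z : Fin l → ℝ)
    (τ : ℝ) (zbar : ℝ) (hzbar : zbar = (1 / (l : ℝ)) * ∑ j, z j) :
    (∀ i, linearizedSoftmax l (fun j => z j / τ) i - 1 / (l : ℝ)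
        = (z i - zbar) / ((l : ℝ) * τ)) ∧
    (1 / (l : ℝ)) * ∑ i, (linearizedSoftmax l (fun j => z j / τ) i - 1 / (l : ℝ)) ^ 2
      = (1 / ((l : ℝ) ^ 2 * τ ^ 2)) * ((1 / (l : ℝ)) * ∑ i, (z i - zbar) ^ 2) := by
  subst hzbar
  have deviation := linearizedSoftmax_div_sub_one_div l z τ
  refine ⟨deviation, ?_⟩
  simp_rw [deviation, div_pow, ← Finset.sum_div]
  ring

/-- For `τ > 0`, with `z̄` the mean of the entries of `z`:
`linearizedSoftmax (z/τ)_i − 1/l = (z_i − z̄)/(lτ)` for every `i`, and consequently the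
empirical variance of the entries of `linearizedSoftmax (z/τ)` equals `1/(l²τ²)` times
the empirical variance of the entries of `z`. -/
theorem linearizedSoftmax_temperature_variance (l : ℕ) (hl : 1 ≤ l) (z : Fin l → ℝ)
    (τ : ℝ) (hτ : 0 < τ) (zbar : ℝ) (hzbar : zbar = (1 / (l : ℝ)) * ∑ j, z j) :
    (∀ i, linearizedSoftmax l (fun j => z j / τ) i - 1 / (l : ℝ)
        = (z i - zbar) / ((l : ℝ) * τ)) ∧
    (1 / (l : ℝ)) * ∑ i, (linearizedSoftmax l (fun j => z j / τ) i - 1 / (l : ℝ)) ^ 2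
      = (1 / ((l : ℝ) ^ 2 * τ ^ 2)) * ((1 / (l : ℝ)) * ∑ i, (z i - zbar) ^ 2) :=
  linearizedSoftmax_temperature_variance_general l z τ zbar hzbar
end

section
/- Let d, l ≥ 1, x₁, …, x_l ∈ ℝ^d, y₁, …, y_{l−1} ∈ ℝ, and let Z ∈ ℝ^{(d+1)×l} be the matrix whose i-th column is (x_i, y_i) for i ≤ l−1 and whose l-th column is (x_l, 0). Let M ∈ ℝ^{(d+1)×(d+1)} have upper-left d×d block M₁₁ and lower-left 1×d block m₂₁ᵀ, let V ∈ ℝ^{(d+1)×(d+1)} have last row (v₂₁ᵀ, v₂₂) with v₂₁ ∈ ℝ^d and v₂₂ ∈ ℝ, and let τ > 0. Define the linearized-attention output E := Z + (1/l)·V Z·( (1/τ)·ZᵀMZ + 𝟙𝟙ᵀ − (1/(lτ))·𝟙·(𝟙ᵀ ZᵀMZ) ), where 𝟙 ∈ ℝ^l is the all-ones vector. Then the prediction entry satisfies exactly: E_{d+1,l} = (1/τ)·ŵᵀ x_l + v₂₁ᵀ s_x + v₂₂ s_y, where ŵ := M₁₁ᵀ(C_xx v₂₁ + v₂₂ C_xy)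 + (v₂₁ᵀ C_xy + v₂₂ C_yy)·m₂₁. -/
/-!
With the softmax linearized, the centring term `-(1/(lτ)) 𝟙𝟙ᵀZᵀMZ` turns the Gram matrix
`ZZᵀ/l` into the empirical covariance `Σ` of the columns of `Z`, so that
`E = Z + (1/τ) V Σ M Z + (V μ) 𝟙ᵀ` with `μ` the column mean of `Z`. The entry `(d+1, l)` is then
read off blockwise: the last row of `V` is `(v₂₁ᵀ, v₂₂)`, the blocks of `Σ` are `C_xx`, `C_xy`,
`C_yy`, the blocks of `μ` are `s_x`, `s_y`, and the last column of `Z` is `(x_l, 0)`.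
-/

open Matrix

namespace Matrix

variable {𝕜 m n : Type*} [Field 𝕜] [Fintype n]

noncomputable def colMean (Z : Matrix m n 𝕜) : m → 𝕜 :=
  (1 / (Fintype.card n : 𝕜)) • (Z *ᵥ 1)

noncomputable def colCovariance (Z : Matrix m n 𝕜) : Matrix m m 𝕜 :=
  (1 / (Fintype.card n : 𝕜)) • (Z * Zᵀ) - vecMulVec (colMean Z) (colMean Z)

theorem colMean_apply (Z : Matrix m n 𝕜) (a : m) :
    colMean Z a = 1 / (Fintype.card n : 𝕜) * ∑ j, Z a j := by
  simp [colMean, mulVec, dotProduct]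

theorem colCovariance_apply (Z : Matrix m n 𝕜) (a b : m) :
    colCovariance Z a b
      = 1 / (Fintype.card n : 𝕜) * ∑ j, Z a j * Z b j - colMean Z a * colMean Z b := by
  simp [colCovariance, mul_apply, vecMulVec_apply]

theorem colCovariance_comm (Z : Matrix m n 𝕜) (a b : m) :
    colCovariance Z a b = colCovariance Z b a := by
  simp only [colCovariance_apply, mul_comm]

theorem vecMul_colCovariance [Fintype m] (Z : Matrix m n 𝕜) (v : m → 𝕜) :
    v ᵥ* colCovariance Z = colCovariance Z *ᵥ v := by
  rw [← vecMul_transpose]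
  congr 1
  ext a b
  exact colCovariance_comm Z a b

theorem linearizedAttention_eq_covariance [Fintype m] (V M : Matrix m m 𝕜) (Z : Matrix m n 𝕜)
    (τ : 𝕜) :
    (1 / (Fintype.card n : 𝕜)) • (V * Z * ((1 / τ) • (Zᵀ * M * Z) + vecMulVec (1 : n → 𝕜) 1
      - (1 / ((Fintype.card n : 𝕜) * τ)) • vecMulVec 1 (1 ᵥ* (Zᵀ * M * Z))))
      = (1 / τ) • (V * colCovariance Z * M * Z) + vecMulVec (V *ᵥ colMean Z) 1 := by
  have hgram : V * Z * (Zᵀ * M * Z) = V * (Z * Zᵀ) * M * Z := by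
    simp only [Matrix.mul_assoc]
  have hcentring : V * Z * vecMulVec (1 : n → 𝕜) (1 ᵥ* (Zᵀ * M * Z))
      = V * vecMulVec (Z *ᵥ 1) (Z *ᵥ 1) * M * Z := by
    rw [mul_vecMulVec, mul_vecMulVec, vecMulVec_mul, vecMulVec_mul, ← vecMul_vecMul,
      ← vecMul_vecMul, vecMul_transpose, mulVec_mulVec]
  simp only [colCovariance, colMean, Matrix.mul_add, Matrix.mul_sub, Matrix.mul_smul, hgram,
    hcentring, mul_vecMulVec, Matrix.sub_mul, Matrix.smul_mul, smul_vecMulVec, vecMulVec_smul,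
    mulVec_smul, mulVec_mulVec]
  module

theorem mulVec_vecMul_dotProduct_eq_of_blocks {d : ℕ} {C M : Matrix (Fin (d + 1)) (Fin (d + 1)) 𝕜}
    {r z : Fin (d + 1) → 𝕜} {C₁₁ M₁₁ : Matrix (Fin d) (Fin d) 𝕜} {c₁₂ m₂₁ r₁ z₁ : Fin d → 𝕜}
    {c₂₂ r₂ : 𝕜} (hC₁₁ : ∀ a b, C a.castSucc b.castSucc = C₁₁ a b)
    (hC₁₂ : ∀ a, C a.castSucc (Fin.last d) = c₁₂ a) (hC₂₁ : ∀ a, C (Fin.last d) a.castSucc = c₁₂ a)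
    (hC₂₂ : C (Fin.last d) (Fin.last d) = c₂₂) (hM₁₁ : ∀ a b, M a.castSucc b.castSucc = M₁₁ a b)
    (hM₂₁ : ∀ b, M (Fin.last d) b.castSucc = m₂₁ b) (hr₁ : ∀ a, r a.castSucc = r₁ a)
    (hr₂ : r (Fin.last d) = r₂) (hz₁ : ∀ a, z a.castSucc = z₁ a) (hz₂ : z (Fin.last d) = 0) :
    (C *ᵥ r) ᵥ* M ⬝ᵥ z
      = (M₁₁ᵀ *ᵥ (C₁₁ *ᵥ r₁ + r₂ • c₁₂) + (r₁ ⬝ᵥ c₁₂ + r₂ * c₂₂) • m₂₁) ⬝ᵥ z₁ := by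
  have hCr₁ : ∀ a, (C *ᵥ r) a.castSucc = (C₁₁ *ᵥ r₁ + r₂ • c₁₂) a := by
    simp [mulVec, dotProduct, Fin.sum_univ_castSucc, hC₁₁, hC₁₂, hr₁, hr₂, mul_comm]
  have hCr₂ : (C *ᵥ r) (Fin.last d) = r₁ ⬝ᵥ c₁₂ + r₂ * c₂₂ := by
    simp [mulVec, dotProduct, Fin.sum_univ_castSucc, hC₂₁, hC₂₂, hr₁, hr₂, mul_comm]
  have hCrM : ∀ b, ((C *ᵥ r) ᵥ* M) b.castSucc
      = (M₁₁ᵀ *ᵥ (C₁₁ *ᵥ r₁ + r₂ • c₁₂) + (r₁ ⬝ᵥ c₁₂ + r₂ * c₂₂) • m₂₁) b := by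
    intro b
    rw [vecMul, dotProduct, Fin.sum_univ_castSucc]
    simp only [hCr₁, hCr₂, hM₁₁, hM₂₁, Pi.add_apply, Pi.smul_apply, smul_eq_mul, mulVec_transpose]
    rfl
  rw [dotProduct, Fin.sum_univ_castSucc]
  simp only [hCrM, hz₁, hz₂, mul_zero, add_zero]
  rfl

end Matrix

theorem linearized_attention_prediction_general (d l : ℕ)
    (x : Fin l → Fin d → ℝ) (y : Fin l → ℝ)
    (lastCol : Fin l)
    (hy : y lastCol = 0)
    (M11 : Matrix (Fin d) (Fin d) ℝ) (m21 v21 : Fin d → ℝ) (v22 : ℝ)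
    (M V : Matrix (Fin (d + 1)) (Fin (d + 1)) ℝ)
    (hM11 : ∀ a b : Fin d, M a.castSucc b.castSucc = M11 a b)
    (hm21 : ∀ b : Fin d, M (Fin.last d) b.castSucc = m21 b)
    (hv21 : ∀ a : Fin d, V (Fin.last d) a.castSucc = v21 a)
    (hv22 : V (Fin.last d) (Fin.last d) = v22)
    (τ : ℝ)
    (Z : Matrix (Fin (d + 1)) (Fin l) ℝ)
    (hZ : ∀ (a : Fin (d + 1)) (i : Fin l),
      Z a i = if h : (a : ℕ) < d then x i ⟨a, h⟩ else y i)
    (ones : Fin l → ℝ) (hones : ones = fun _ => 1)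
    (E : Matrix (Fin (d + 1)) (Fin l) ℝ)
    (hE : E = Z + ((1 : ℝ) / l) • (V * Z *
      ((1 / τ) • (Zᵀ * M * Z) + vecMulVec ones ones
        - (1 / ((l : ℝ) * τ)) • vecMulVec ones (ones ᵥ* (Zᵀ * M * Z)))))
    (sx : Fin d → ℝ) (hsx : sx = fun a => (1 / (l : ℝ)) * ∑ i, x i a)
    (sy : ℝ) (hsy : sy = (1 / (l : ℝ)) * ∑ i, y i)
    (Cxx : Matrix (Fin d) (Fin d) ℝ)
    (hCxx : Cxx = ((1 : ℝ) / l) • ∑ i, vecMulVec (x i) (x i) - vecMulVec sx sx)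
    (Cxy : Fin d → ℝ)
    (hCxy : Cxy = (fun a => (1 / (l : ℝ)) * ∑ i, y i * x i a) - sy • sx)
    (Cyy : ℝ) (hCyy : Cyy = (1 / (l : ℝ)) * ∑ i, (y i) ^ 2 - sy ^ 2)
    (what : Fin d → ℝ)
    (hwhat : what = M11ᵀ.mulVec (Cxx.mulVec v21 + v22 • Cxy)
      + (v21 ⬝ᵥ Cxy + v22 * Cyy) • m21) :
    E (Fin.last d) lastCol = (1 / τ) * (what ⬝ᵥ x lastCol) + v21 ⬝ᵥ sx + v22 * sy := by
  have hZx : ∀ a i, Z a.castSucc i = x i a := fun a i => by simp [hZ]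
  have hZy : ∀ i, Z (Fin.last d) i = y i := fun i => by simp [hZ]
  have hmx : ∀ a, colMean Z a.castSucc = sx a := by
    simp [colMean_apply, hZx, hsx]
  have hmy : colMean Z (Fin.last d) = sy := by
    simp [colMean_apply, hZy, hsy]
  have hCovxx : ∀ a b, colCovariance Z a.castSucc b.castSucc = Cxx a b := by
    simp [colCovariance_apply, hZx, hCxx, hmx, Matrix.sum_apply, Finset.mul_sum, vecMulVec_apply]
  have hCovyx : ∀ a, colCovariance Z (Fin.last d) a.castSucc = Cxy a := by
    simp [colCovariance_apply, hZx, hZy, hCxy, hmx, hmy, Finset.mul_sum, mul_comm]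
  have hCovxy : ∀ a, colCovariance Z a.castSucc (Fin.last d) = Cxy a := fun a => by
    rw [colCovariance_comm, hCovyx]
  have hCovyy : colCovariance Z (Fin.last d) (Fin.last d) = Cyy := by
    simp [colCovariance_apply, hZy, hCyy, hmy, sq]
  have hVm : (V *ᵥ colMean Z) (Fin.last d) = v21 ⬝ᵥ sx + v22 * sy := by
    simp [mulVec, dotProduct, Fin.sum_univ_castSucc, hv21, hv22, hmx, hmy]
  have hattn := linearizedAttention_eq_covariance V M Z τ
  rw [Fintype.card_fin] at hattn
  rw [hE, hones, show (fun _ => 1 : Fin l → ℝ) = 1 from rfl, hattn]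
  simp only [Matrix.add_apply, Matrix.smul_apply, vecMulVec_apply, mul_apply_eq_vecMul,
    vecMul_colCovariance, hVm, hZy, hy]
  rw [show (((colCovariance Z *ᵥ V (Fin.last d)) ᵥ* M) ᵥ* Z) lastCol
      = ((colCovariance Z *ᵥ V (Fin.last d)) ᵥ* M) ⬝ᵥ fun c => Z c lastCol from rfl,
    mulVec_vecMul_dotProduct_eq_of_blocks hCovxx hCovxy hCovyx hCovyy hM11 hm21 hv21 hv22
      (fun a => hZx a lastCol) ((hZy lastCol).trans hy), ← hwhat]
  simp only [zero_add, Pi.one_apply, mul_one, smul_eq_mul]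
  ring

/-- Exact expanded form of the linearized-attention prediction: for the embedding
matrix `Z` whose `i`-th column is `(xᵢ, yᵢ)` (with `y = 0` in the last column), and the
linearized-attention output
`E := Z + (1/l)·V Z ((1/τ)·ZᵀMZ + 𝟙𝟙ᵀ − (1/(lτ))·𝟙(𝟙ᵀ ZᵀMZ))`,
the prediction entry satisfies
`E_{d+1,l} = (1/τ)·ŵᵀ x_l + v₂₁ᵀ s_x + v₂₂ s_y` with
`ŵ = M₁₁ᵀ(C_xx v₂₁ + v₂₂ C_xy) + (v₂₁ᵀ C_xy + v₂₂ C_yy)·m₂₁`. -/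
theorem linearized_attention_prediction (d l : ℕ) (hd : 1 ≤ d) (hl : 1 ≤ l)
    (x : Fin l → Fin d → ℝ) (y : Fin l → ℝ)
    (lastCol : Fin l) (hlastCol : (lastCol : ℕ) = l - 1)
    (hy : y lastCol = 0)
    (M11 : Matrix (Fin d) (Fin d) ℝ) (m21 v21 : Fin d → ℝ) (v22 : ℝ)
    (M V : Matrix (Fin (d + 1)) (Fin (d + 1)) ℝ)
    (hM11 : ∀ a b : Fin d, M a.castSucc b.castSucc = M11 a b)
    (hm21 : ∀ b : Fin d, M (Fin.last d) b.castSucc = m21 b)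
    (hv21 : ∀ a : Fin d, V (Fin.last d) a.castSucc = v21 a)
    (hv22 : V (Fin.last d) (Fin.last d) = v22)
    (τ : ℝ) (hτ : 0 < τ)
    (Z : Matrix (Fin (d + 1)) (Fin l) ℝ)
    (hZ : ∀ (a : Fin (d + 1)) (i : Fin l),
      Z a i = if h : (a : ℕ) < d then x i ⟨a, h⟩ else y i)
    (ones : Fin l → ℝ) (hones : ones = fun _ => 1)
    (E : Matrix (Fin (d + 1)) (Fin l) ℝ)
    (hE : E = Z + ((1 : ℝ) / l) • (V * Z *
      ((1 / τ) • (Zᵀ * M * Z) + vecMulVec ones ones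
        - (1 / ((l : ℝ) * τ)) • vecMulVec ones (ones ᵥ* (Zᵀ * M * Z)))))
    (sx : Fin d → ℝ) (hsx : sx = fun a => (1 / (l : ℝ)) * ∑ i, x i a)
    (sy : ℝ) (hsy : sy = (1 / (l : ℝ)) * ∑ i, y i)
    (Cxx : Matrix (Fin d) (Fin d) ℝ)
    (hCxx : Cxx = ((1 : ℝ) / l) • ∑ i, vecMulVec (x i) (x i) - vecMulVec sx sx)
    (Cxy : Fin d → ℝ)
    (hCxy : Cxy = (fun a => (1 / (l : ℝ)) * ∑ i, y i * x i a) - sy • sx)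
    (Cyy : ℝ) (hCyy : Cyy = (1 / (l : ℝ)) * ∑ i, (y i) ^ 2 - sy ^ 2)
    (what : Fin d → ℝ)
    (hwhat : what = M11ᵀ.mulVec (Cxx.mulVec v21 + v22 • Cxy)
      + (v21 ⬝ᵥ Cxy + v22 * Cyy) • m21) :
    E (Fin.last d) lastCol = (1 / τ) * (what ⬝ᵥ x lastCol) + v21 ⬝ᵥ sx + v22 * sy :=
  linearized_attention_prediction_general d l x y lastCol hy M11 m21 v21 v22 M V hM11 hm21 hv21 hv22
    τ Z hZ ones hones E hE sx hsx sy hsy Cxx hCxx Cxy hCxy Cyy hCyy what hwhat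
end

section
/- Let X̄ ∈ ℝ^{n×d} with X̄ᵀX̄ invertible, ȳ ∈ ℝ^n, σ > 0, μ_w ∈ ℝ^d, Σ_w ∈ ℝ^{d×d} symmetric positive definite, and l > 0. Define C_xx := X̄ᵀX̄/l and C_xy := X̄ᵀȳ/l, and set the parameters M₁₁ := (l/σ²)·(X̄ᵀX̄/σ² + Σ_w⁻¹)⁻¹, v₂₁ := (σ²/l)·(X̄ᵀX̄/l)⁻¹ Σ_w⁻¹ μ_w, v₂₂ := 1, m₂₁ := 0 (here X̄ᵀX̄/σ² + Σ_w⁻¹ is positive definite, hence invertible). Then, with temperature τ = 1, the attention estimator equals the Bayes-optimal ridge estimator: M₁₁ᵀ(C_xx v₂₁ + v₂₂ C_xy) + (v₂₁ᵀ C_xy + v₂₂ C_yy)·m₂₁ = (X̄ᵀX̄/σ² + Σ_w⁻¹)⁻¹ (X̄ᵀȳ/σ² + Σ_w⁻¹ μ_w) for every C_yy ∈ ℝ. -/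
/-! Since `C_xx` is invertible, `C_xx v₂₁ = (σ²/l) Σ_w⁻¹ μ_w`, and `M₁₁` is `l/σ²` times the
inverse of the posterior precision `P = X̄ᵀX̄/σ² + Σ_w⁻¹`, which is symmetric, so `M₁₁ᵀ = M₁₁`.
With `m₂₁ = 0` the attention estimator is therefore `(l/σ²) P⁻¹ ((σ²/l) Σ_w⁻¹ μ_w + X̄ᵀȳ/l)`,
which is the Bayes estimator. -/

open Matrix

namespace Matrix

variable {m n α R : Type*} [Fintype n] [DecidableEq n] [CommRing α]

theorem mulVec_nonsing_inv_mulVec {A : Matrix n n α} (hA : IsUnit A) (v : n → α) :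
    A *ᵥ (A⁻¹ *ᵥ v) = v := by
  rw [mulVec_mulVec, mul_nonsing_inv A ((isUnit_iff_isUnit_det A).1 hA), one_mulVec]

theorem isSymm_smul_transpose_mul_self_add_inv [Fintype m] [SMul R α] {S : Matrix n n α}
    (hS : S.IsSymm) (c : R) (X : Matrix m n α) : (c • (Xᵀ * X) + S⁻¹).IsSymm :=
  (IsSymm.smul (transpose_mul Xᵀ X) c).add hS.inv

end Matrix

/-- With parameters `M₁₁ := (l/σ²)(X̄ᵀX̄/σ² + Σ_w⁻¹)⁻¹`,
`v₂₁ := (σ²/l)(X̄ᵀX̄/l)⁻¹ Σ_w⁻¹ μ_w`, `v₂₂ := 1`, `m₂₁ := 0`, the attention estimator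
(at temperature `τ = 1`) equals the Bayes-optimal ridge estimator:
`M₁₁ᵀ(C_xx v₂₁ + v₂₂ C_xy) + (v₂₁ᵀ C_xy + v₂₂ C_yy)·m₂₁
  = (X̄ᵀX̄/σ² + Σ_w⁻¹)⁻¹ (X̄ᵀȳ/σ² + Σ_w⁻¹ μ_w)` for every `C_yy`. -/
theorem pretrained_params_eq_bayes {n d : ℕ}
    (X : Matrix (Fin n) (Fin d) ℝ) (hX : IsUnit (Xᵀ * X))
    (y : Fin n → ℝ) (σ : ℝ) (hσ : 0 < σ)
    (μw : Fin d → ℝ) (Sw : Matrix (Fin d) (Fin d) ℝ) (hSw : Sw.PosDef)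
    (l : ℝ) (hl : 0 < l)
    (Cxx : Matrix (Fin d) (Fin d) ℝ) (hCxx : Cxx = (1 / l) • (Xᵀ * X))
    (Cxy : Fin d → ℝ) (hCxy : Cxy = (1 / l) • Xᵀ.mulVec y)
    (M11 : Matrix (Fin d) (Fin d) ℝ)
    (hM11 : M11 = (l / σ ^ 2) • ((1 / σ ^ 2) • (Xᵀ * X) + Sw⁻¹)⁻¹)
    (v21 : Fin d → ℝ)
    (hv21 : v21 = (σ ^ 2 / l) • ((1 / l) • (Xᵀ * X))⁻¹.mulVec (Sw⁻¹.mulVec μw))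
    (v22 : ℝ) (hv22 : v22 = 1)
    (m21 : Fin d → ℝ) (hm21 : m21 = 0) :
    ∀ Cyy : ℝ,
      M11ᵀ.mulVec (Cxx.mulVec v21 + v22 • Cxy) + (v21 ⬝ᵥ Cxy + v22 * Cyy) • m21
        = (((1 / σ ^ 2) • (Xᵀ * X) + Sw⁻¹)⁻¹).mulVec
            ((1 / σ ^ 2) • Xᵀ.mulVec y + Sw⁻¹.mulVec μw) := by
  intro Cyy
  subst hCxx hCxy hM11 hv21 hv22 hm21
  have hP : ((1 / σ ^ 2) • (Xᵀ * X) + Sw⁻¹).IsSymm :=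
    isSymm_smul_transpose_mul_self_add_inv (isHermitian_iff_isSymm.1 hSw.isHermitian) _ X
  have hCxx : IsUnit ((1 / l) • (Xᵀ * X)) := hX.smul (Units.mk0 (1 / l) (by positivity))
  rw [transpose_smul, hP.inv.eq, mulVec_smul, mulVec_nonsing_inv_mulVec hCxx, smul_zero,
    add_zero, one_smul, smul_mulVec, ← mulVec_smul]
  congr 1
  match_scalars <;> field_simp
end
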